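/- arXiv:1904.05015 — 2 statements merged into one kernel-verified Lean document; each statement's English description precedes it below -/
import Mathlib

section
/- Fix ℓ ≥ 1. A partition λ is an ℓ-core (i.e., no partition μ ⊆ λ has λ∖μ a border strip of ℓ nodes) if and only if every component of its ℓ-quotient is the empty partition, λ^i = ∅ for all i. Moreover, the map sending an ℓ-core λ to its charge vector (c_0(λ), …, c_{ℓ−1}(λ)) is a bijection from the set of ℓ-cores onto {(c_0,…,c_{ℓ−1}) ∈ ℤ^ℓ : c_0 + ⋯ + c_{ℓ−1} = 0}. -/
/-- A partition: a weakly decreasing, eventually zero sequence of naturals;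
`part k` is the `(k+1)`-st part `λ_{k+1}`. -/
structure YPartition where
  part : ℕ → ℕ
  antitone : ∀ a b : ℕ, a ≤ b → part b ≤ part a
  eventually_zero : ∃ N, ∀ n, N ≤ n → part n = 0

namespace Wreath

attribute [local instance] Classical.propDecidable

/-- The conjugate partition: `conj lam a = ᵗλ_a` for `a ≥ 1`. -/
noncomputable def conj (lam : YPartition) (a : ℕ) : ℕ :=
  Set.ncard {k : ℕ | a ≤ lam.part k}

/-- The Maya diagram of a partition: value `+1` at `j` iff `j = ᵗλ_a − a` for some `a ≥ 1`. -/
noncomputable def mayaFun (lam : YPartition) : ℤ → ℤ := fun j =>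
  if ∃ a : ℕ, j = (conj lam (a + 1) : ℤ) - (a + 1 : ℤ) then 1 else -1

/-- `f : ℤ → ℤ` is a Maya diagram: values `±1`, eventually `-1` to the right (large `j`),
eventually `+1` to the left (small `j`). -/
def IsMayaFun (f : ℤ → ℤ) : Prop :=
  (∀ j, f j = 1 ∨ f j = -1) ∧ (∃ N : ℤ, ∀ j, N ≤ j → f j = -1) ∧
    (∃ N : ℤ, ∀ j, j ≤ N → f j = 1)

/-- The charge `#{j < 0 : f j = −1} − #{j ≥ 0 : f j = 1}`. -/
noncomputable def chargeFun (f : ℤ → ℤ) : ℤ :=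
  (Set.ncard {j : ℤ | j < 0 ∧ f j = -1} : ℤ) - (Set.ncard {j : ℤ | 0 ≤ j ∧ f j = 1} : ℤ)

def emptyPartition : YPartition :=
  ⟨fun _ => 0, fun _ _ _ => le_rfl, ⟨0, fun _ _ => rfl⟩⟩

/-- The partition whose Maya diagram is `f` (junk value if there is none). -/
noncomputable def partitionOfMaya (f : ℤ → ℤ) : YPartition :=
  if h : ∃ lam : YPartition, mayaFun lam = f then h.choose else emptyPartition

/-- The charge `c_i(λ)` of the `i`-th quotient Maya diagram `j ↦ m(λ)(i + jℓ)`. -/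
noncomputable def chargeQuot (ℓ : ℕ) (lam : YPartition) (i : ℤ) : ℤ :=
  chargeFun fun j => mayaFun lam (i + j * (ℓ : ℤ))

/-- The `i`-th quotient component `λ^i`: the partition whose Maya diagram is
`j ↦ m_i(λ)(j − c_i(λ))`. -/
noncomputable def quotComp (ℓ : ℕ) (lam : YPartition) (i : ℤ) : YPartition :=
  partitionOfMaya fun j => mayaFun lam (i + (j - chargeQuot ℓ lam i) * (ℓ : ℤ))

/-- The `ℓ`-core of `λ`: the partition whose Maya diagram has value `−1` at `i + jℓ`
(`0 ≤ i < ℓ`) exactly when `j ≥ −c_i(λ)`. -/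
noncomputable def coreOf (ℓ : ℕ) (lam : YPartition) : YPartition :=
  partitionOfMaya fun j =>
    if -(chargeQuot ℓ lam (Int.emod j (ℓ : ℤ))) ≤ Int.ediv j (ℓ : ℤ) then -1 else 1

/-- Membership of the node `x = (a,b)` in the Young diagram of `lam`:
`1 ≤ a`, `1 ≤ b`, `a ≤ λ_b`.  The content of `(a,b)` is `b − a`. -/
def Partition.memYD (lam : YPartition) (x : ℤ × ℤ) : Prop :=
  1 ≤ x.1 ∧ 1 ≤ x.2 ∧ x.1 ≤ (lam.part (x.2 - 1).toNat : ℤ)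

/-- Containment of Young diagrams. -/
def Sub (lam mu : YPartition) : Prop := ∀ x, Partition.memYD lam x → Partition.memYD mu x

/-- Membership in the skew diagram `μ∖λ`. -/
def SkewMem (lam mu : YPartition) (x : ℤ × ℤ) : Prop :=
  Partition.memYD mu x ∧ ¬ Partition.memYD lam x

/-- The number of nodes of `μ∖λ`. -/
noncomputable def skewSize (lam mu : YPartition) : ℕ := Set.ncard {x | SkewMem lam mu x}

/-- The size `|λ|`. -/
noncomputable def Partition.size (lam : YPartition) : ℕ := Set.ncard {x | Partition.memYD lam x}

/-- Edge-adjacency of nodes. -/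
def adjacent (x y : ℤ × ℤ) : Prop :=
  (x.1 = y.1 ∧ (x.2 = y.2 + 1 ∨ y.2 = x.2 + 1)) ∨
  (x.2 = y.2 ∧ (x.1 = y.1 + 1 ∨ y.1 = x.1 + 1))

/-- `μ∖λ` is a border strip: `λ ⊆ μ`, nonempty, connected through edge-adjacent nodes,
and containing no 2×2 block. -/
def IsBorderStrip (lam mu : YPartition) : Prop :=
  Sub lam mu ∧ (∃ x, SkewMem lam mu x) ∧
  (∀ x y, SkewMem lam mu x → SkewMem lam mu y →
    Relation.ReflTransGen (fun u v => SkewMem lam mu u ∧ SkewMem lam mu v ∧ adjacent u v) x y) ∧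
  ¬ ∃ a b : ℤ, SkewMem lam mu (a, b) ∧ SkewMem lam mu (a + 1, b) ∧
      SkewMem lam mu (a, b + 1) ∧ SkewMem lam mu (a + 1, b + 1)

/-- An `ℓ`-core: a partition from which no border strip of `ℓ` nodes can be removed. -/
def IsCore (ℓ : ℕ) (lam : YPartition) : Prop :=
  ¬ ∃ mu : YPartition, IsBorderStrip mu lam ∧ skewSize mu lam = ℓ

/-- Dominance order (on partitions of the same size): `Dom μ λ` means `μ ⊴ λ`. -/
def Dom (mu lam : YPartition) : Prop :=
  Partition.size mu = Partition.size lam ∧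
  ∀ k : ℕ, ∑ b ∈ Finset.range k, mu.part b ≤ ∑ b ∈ Finset.range k, lam.part b

/-- `x` is the node of `μ∖λ` of largest content (the initial node of a strip). -/
def IsMaxContentNode (lam mu : YPartition) (x : ℤ × ℤ) : Prop :=
  SkewMem lam mu x ∧ ∀ y, SkewMem lam mu y → y.2 - y.1 ≤ x.2 - x.1

/-- `x` is the node of `μ∖λ` of smallest content (the final node of a strip). -/
def IsMinContentNode (lam mu : YPartition) (x : ℤ × ℤ) : Prop :=
  SkewMem lam mu x ∧ ∀ y, SkewMem lam mu y → x.2 - x.1 ≤ y.2 - y.1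

/-- Add `1` to each of the first `k` parts (append a column of height `k`). -/
def addColParts (k : ℕ) (f : ℕ → ℕ) : ℕ → ℕ := fun r => if r < k then f r + 1 else f r

/-- The number of (nonzero) rows of a partition. -/
noncomputable def numRows (nu : YPartition) : ℕ := Set.ncard {r : ℕ | 0 < nu.part r}

/-- Append a new final row of length `k` after `len` rows. -/
def addRowParts (k len : ℕ) (f : ℕ → ℕ) : ℕ → ℕ :=
  fun r => if r < len then f r else if r = len then k else 0

/-- One column-addition step: `μ` is obtained from `ν` by adding, in component `i` of the
`ℓ`-quotient, a new column of height `k` no taller than any existing column. -/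
def IsColStep (ℓ : ℕ) (nu mu : YPartition) (i k : ℕ) : Prop :=
  i < ℓ ∧ 1 ≤ k ∧
  (∀ a : ℕ, 1 ≤ a → (a : ℕ) ≤ (quotComp ℓ nu (i : ℤ)).part 0 →
    k ≤ conj (quotComp ℓ nu (i : ℤ)) a) ∧
  coreOf ℓ mu = coreOf ℓ nu ∧
  (∀ i' : ℕ, i' < ℓ → i' ≠ i → quotComp ℓ mu (i' : ℤ) = quotComp ℓ nu (i' : ℤ)) ∧
  (quotComp ℓ mu (i : ℤ)).part = addColParts k ((quotComp ℓ nu (i : ℤ)).part)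

/-- One row-addition step: `μ` is obtained from `ν` by adding, in component `i` of the
`ℓ`-quotient, a new final row of length `k` no longer than any existing row. -/
def IsRowStep (ℓ : ℕ) (nu mu : YPartition) (i k : ℕ) : Prop :=
  i < ℓ ∧ 1 ≤ k ∧
  (∀ r : ℕ, 0 < (quotComp ℓ nu (i : ℤ)).part r → k ≤ (quotComp ℓ nu (i : ℤ)).part r) ∧
  coreOf ℓ mu = coreOf ℓ nu ∧
  (∀ i' : ℕ, i' < ℓ → i' ≠ i → quotComp ℓ mu (i' : ℤ) = quotComp ℓ nu (i' : ℤ)) ∧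
  (quotComp ℓ mu (i : ℤ)).part =
    addRowParts k (numRows (quotComp ℓ nu (i : ℤ))) ((quotComp ℓ nu (i : ℤ)).part)

/-- A column-addition sequence for `λ`. -/
def IsColSeq (ℓ : ℕ) (lam : YPartition) (N : ℕ) (seq : ℕ → YPartition) : Prop :=
  seq 0 = coreOf ℓ lam ∧ seq N = lam ∧
  ∀ t, t < N → ∃ i k, IsColStep ℓ (seq t) (seq (t + 1)) i k

/-- A row-addition sequence for `λ`. -/
def IsRowSeq (ℓ : ℕ) (lam : YPartition) (N : ℕ) (seq : ℕ → YPartition) : Prop :=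
  seq 0 = coreOf ℓ lam ∧ seq N = lam ∧
  ∀ t, t < N → ∃ i k, IsRowStep ℓ (seq t) (seq (t + 1)) i k

/-- Left-to-right order on a column-addition sequence: for `1 ≤ r < s ≤ N` the content of the
initial node of the `r`-th strip is strictly greater than the content of the final node of the
`s`-th strip. -/
def LeftToRight (N : ℕ) (seq : ℕ → YPartition) : Prop :=
  ∀ r s, 1 ≤ r → r < s → s ≤ N → ∀ x y,
    IsMaxContentNode (seq (r - 1)) (seq r) x →
    IsMinContentNode (seq (s - 1)) (seq s) y →
    y.2 - y.1 < x.2 - x.1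

/-- Right-to-left order on a row-addition sequence: for `1 ≤ r < s ≤ N` the content of the
final node of the `r`-th strip is strictly less than the content of the final node of the
`s`-th strip. -/
def RightToLeft (N : ℕ) (seq : ℕ → YPartition) : Prop :=
  ∀ r s, 1 ≤ r → r < s → s ≤ N → ∀ x y,
    IsMinContentNode (seq (r - 1)) (seq r) x →
    IsMinContentNode (seq (s - 1)) (seq s) y →
    x.2 - x.1 < y.2 - y.1

/-- `x` is an addable node of `λ`. -/
def Addable (lam : YPartition) (x : ℤ × ℤ) : Prop :=
  ¬ Partition.memYD lam x ∧
    ∃ mu : YPartition, ∀ y, Partition.memYD mu y ↔ (Partition.memYD lam y ∨ y = x)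

/-- `x` is a removable node of `λ`. -/
def Removable (lam : YPartition) (x : ℤ × ℤ) : Prop :=
  Partition.memYD lam x ∧
    ∃ mu : YPartition, ∀ y, Partition.memYD mu y ↔ (Partition.memYD lam y ∧ y ≠ x)

end Wreath

open Wreath

/-!
Removing a border strip of size `ℓ` from `λ` amounts to exchanging, in the Maya diagram `m(λ)`,
a `+1` at some `j` with a `-1` at `j - ℓ`: if the strip occupies the rows `b, …, d`, the `-1` of
row `b` moves to the end of row `d`. Hence `λ` is an `ℓ`-core exactly when no quotient diagram
`m_i(λ)` has a `-1` immediately to the left of a `+1`, i.e. when every `m_i(λ)` is `+1` below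
`-c_i(λ)` and `-1` from there on, which says that `λ^i = ∅`.

The charge is additive over residue classes mod `ℓ` and `m(λ)` has charge `0`, so the charge
vector of a core sums to `0`. Conversely, every Maya diagram of charge `0` is the diagram of a
partition, and the core with charge vector `c` is the partition whose `i`-th quotient diagram
is `+1` exactly below `-c_i`.
-/

@[ext]
theorem YPartition.ext {lam mu : YPartition} (h : lam.part = mu.part) : lam = mu := by
  cases lam; cases mu; cases h; rfl

namespace Wreath

section Conjugate

variable (lam : YPartition)

theorem lt_conj_iff {a : ℕ} (ha : 1 ≤ a) (b : ℕ) : b < conj lam a ↔ a ≤ lam.part b := by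
  obtain ⟨N, hN⟩ := lam.eventually_zero
  have hex : ∃ n, lam.part n < a := ⟨N, by rw [hN N le_rfl]; omega⟩
  have hset : {k | a ≤ lam.part k} = Set.Iio (Nat.find hex) := by
    ext k
    simp only [Set.mem_ofPred, Set.mem_Iio]
    constructor
    · intro hk
      by_contra! h
      have := lam.antitone _ _ h
      have := Nat.find_spec hex
      omega
    · intro hk
      have := Nat.find_min hex hk
      omega
  have hconj : conj lam a = Nat.find hex := by rw [conj, hset, Set.ncard_Iio_nat]
  rw [hconj, ← Set.mem_Iio, ← hset]
  rfl

theorem conj_eq_zero {a : ℕ} (h : lam.part 0 < a) : conj lam a = 0 := by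
  have := lt_conj_iff lam (a := a) (by omega) 0
  omega

theorem conj_eq_succ {a n : ℕ} (ha : 1 ≤ a) (h₁ : a ≤ lam.part n) (h₂ : lam.part (n + 1) < a) :
    conj lam a = n + 1 := by
  have := lt_conj_iff lam ha n
  have := lt_conj_iff lam ha (n + 1)
  omega

end Conjugate

section MayaOfPartition

variable (lam : YPartition)

theorem mayaFun_eq_one_iff (j : ℤ) :
    mayaFun lam j = 1 ↔ ∃ a : ℕ, j = (conj lam (a + 1) : ℤ) - (a + 1) := by
  unfold mayaFun
  split_ifs with h <;> simp [h]

theorem mayaFun_eq_one_or (j : ℤ) : mayaFun lam j = 1 ∨ mayaFun lam j = -1 := by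
  unfold mayaFun
  split_ifs <;> simp

theorem conj_sub_ne_sub_part (a b : ℕ) :
    (conj lam (a + 1) : ℤ) - (a + 1) ≠ b - lam.part b := by
  have := lt_conj_iff lam (Nat.le_add_left 1 a) b
  omega

theorem exists_conj_sub_eq {j : ℤ} (h : ∀ b : ℕ, (b : ℤ) - lam.part b ≠ j) :
    ∃ a : ℕ, j = (conj lam (a + 1) : ℤ) - (a + 1) := by
  obtain ⟨N, hN⟩ := lam.eventually_zero
  have hex : ∃ b : ℕ, j < (b : ℤ) - lam.part b :=
    ⟨max N (j + 1).toNat, by rw [hN _ (le_max_left _ _)]; omega⟩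
  -- the first row `b` whose `-1` lies to the right of `j` has `ᵗλ_{b-j} = b`
  set b := Nat.find hex
  have hb : j < (b : ℤ) - lam.part b := Nat.find_spec hex
  refine ⟨(b - j - 1).toNat, ?_⟩
  have hconj : conj lam ((b - j - 1).toNat + 1) = b := by
    rcases eq_or_ne b 0 with h0 | hne
    · rw [h0] at hb ⊢
      exact conj_eq_zero lam (by omega)
    · obtain ⟨n, hn⟩ := Nat.exists_eq_add_one_of_ne_zero hne
      rw [hn] at hb ⊢
      have hprev := Nat.find_min hex (show n < b by omega)
      have := h n
      exact conj_eq_succ lam (by omega) (by omega) (by omega)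
  rw [hconj]
  omega

theorem mayaFun_eq_neg_one_iff (j : ℤ) :
    mayaFun lam j = -1 ↔ ∃ b : ℕ, (b : ℤ) - lam.part b = j := by
  constructor
  · intro hj
    by_contra! h
    have := (mayaFun_eq_one_iff lam j).2 (exists_conj_sub_eq lam h)
    omega
  · rintro ⟨b, rfl⟩
    refine (mayaFun_eq_one_or lam _).resolve_left fun h => ?_
    obtain ⟨a, ha⟩ := (mayaFun_eq_one_iff lam _).1 h
    exact conj_sub_ne_sub_part lam a b ha.symm

theorem strictMono_sub_part : StrictMono fun b : ℕ => (b : ℤ) - lam.part b :=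
  strictMono_nat_of_lt_succ fun b => by
    have := lam.antitone b (b + 1) (Nat.le_succ b)
    push_cast
    omega

theorem mayaFun_injective : Function.Injective mayaFun := by
  intro lam mu h
  have hrange : Set.range (fun b : ℕ => (b : ℤ) - lam.part b) =
      Set.range (fun b : ℕ => (b : ℤ) - mu.part b) := by
    ext j
    rw [Set.mem_range, Set.mem_range, ← mayaFun_eq_neg_one_iff, ← mayaFun_eq_neg_one_iff, h]
  ext b
  have := congrFun (((strictMono_sub_part lam).range_inj (strictMono_sub_part mu)).1 hrange) b
  omega

theorem mayaFun_emptyPartition : mayaFun emptyPartition = fun j => if j < 0 then 1 else -1 := by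
  ext j
  split_ifs with hj
  · rw [mayaFun_eq_one_iff]
    refine ⟨(-j - 1).toNat, ?_⟩
    rw [conj_eq_zero _ (by simp [emptyPartition])]
    omega
  · rw [mayaFun_eq_neg_one_iff]
    exact ⟨j.toNat, by simp [emptyPartition]; omega⟩

end MayaOfPartition

section MayaFunction

theorem funext_of_eq_neg_one_iff {f g : ℤ → ℤ} (hf : ∀ j, f j = 1 ∨ f j = -1)
    (hg : ∀ j, g j = 1 ∨ g j = -1) (h : ∀ j, f j = -1 ↔ g j = -1) : f = g :=
  funext fun j => by
    have := hf j
    have := hg j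
    have := h j
    omega

theorem ncard_lt_add_eq_count {P : ℤ → Prop} [DecidablePred P] {L : ℤ}
    (hP : ∀ j, P j → L ≤ j) (n : ℕ) :
    {j | j < L + n ∧ P j}.ncard = Nat.count (fun k => P (L + k)) n := by
  have : {j | j < L + n ∧ P j} = (fun k : ℕ => L + k) '' {k | k < n ∧ P (L + k)} := by
    ext j
    simp only [Set.mem_ofPred, Set.mem_image]
    constructor
    · rintro ⟨hj, hPj⟩
      have := hP j hPj
      exact ⟨(j - L).toNat, ⟨by omega, by rwa [Int.toNat_of_nonneg (by omega), add_sub_cancel]⟩,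
        by omega⟩
    · rintro ⟨k, ⟨hk, hPk⟩, rfl⟩
      exact ⟨by omega, hPk⟩
  rw [this, Set.ncard_image_of_injective _ fun a b h => by simpa using h,
    Nat.count_eq_card_filter_range, ← Set.ncard_coe_finset]
  congr
  ext
  simp

variable {f : ℤ → ℤ}

noncomputable def chargeAt (f : ℤ → ℤ) (s : ℤ) : ℤ :=
  (Set.ncard {j : ℤ | j < s ∧ f j = -1} : ℤ) - (Set.ncard {j : ℤ | s ≤ j ∧ f j = 1} : ℤ)

theorem IsMayaFun.finite_lt (hf : IsMayaFun f) (s : ℤ) : {j | j < s ∧ f j = -1}.Finite := by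
  obtain ⟨N, hN⟩ := hf.2.2
  refine (Set.finite_Ioo N s).subset fun j ⟨hjs, hj⟩ => ⟨?_, hjs⟩
  by_contra! h
  have := hN j h
  omega

theorem IsMayaFun.finite_ge (hf : IsMayaFun f) (s : ℤ) : {j | s ≤ j ∧ f j = 1}.Finite := by
  obtain ⟨N, hN⟩ := hf.2.1
  refine (Set.finite_Ico s N).subset fun j ⟨hjs, hj⟩ => ⟨hjs, ?_⟩
  by_contra! h
  have := hN j h
  omega

theorem IsMayaFun.chargeAt_add_one (hf : IsMayaFun f) (s : ℤ) :
    chargeAt f (s + 1) = chargeAt f s + 1 := by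
  unfold chargeAt
  rcases hf.1 s with hs | hs
  · have h₁ : {j | j < s + 1 ∧ f j = -1} = {j | j < s ∧ f j = -1} := by
      ext j
      simp only [Set.mem_ofPred]
      rcases lt_trichotomy j s with h | rfl | h <;> simp [hs] <;> omega
    have h₂ : {j | s ≤ j ∧ f j = 1} = insert s {j | s + 1 ≤ j ∧ f j = 1} := by
      ext j
      simp only [Set.mem_insert_iff, Set.mem_ofPred]
      rcases lt_trichotomy j s with h | rfl | h <;> simp [hs] <;> omega
    rw [h₁, h₂, Set.ncard_insert_of_notMem (by simp) (hf.finite_ge _)]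
    push_cast
    ring
  · have h₁ : {j | j < s + 1 ∧ f j = -1} = insert s {j | j < s ∧ f j = -1} := by
      ext j
      simp only [Set.mem_insert_iff, Set.mem_ofPred]
      rcases lt_trichotomy j s with h | rfl | h <;> simp [hs] <;> omega
    have h₂ : {j | s + 1 ≤ j ∧ f j = 1} = {j | s ≤ j ∧ f j = 1} := by
      ext j
      simp only [Set.mem_ofPred]
      rcases lt_trichotomy j s with h | rfl | h <;> simp [hs] <;> omega
    rw [h₁, h₂, Set.ncard_insert_of_notMem (by simp) (hf.finite_lt _)]
    push_cast
    ring

theorem IsMayaFun.chargeAt_eq (hf : IsMayaFun f) (s : ℤ) : chargeAt f s = chargeFun f + s := by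
  induction s using Int.induction_on with
  | zero => simp [chargeAt, chargeFun]
  | succ n ih => rw [hf.chargeAt_add_one, ih]; ring
  | pred n ih =>
    have := hf.chargeAt_add_one (-n - 1)
    rw [sub_add_cancel, ih] at this
    linarith

theorem IsMayaFun.comp_sub (hf : IsMayaFun f) (t : ℤ) : IsMayaFun fun j => f (j - t) := by
  obtain ⟨hval, ⟨N, hN⟩, ⟨M, hM⟩⟩ := hf
  exact ⟨fun j => hval _, ⟨N + t, fun j hj => hN _ (by omega)⟩,
    ⟨M + t, fun j hj => hM _ (by omega)⟩⟩

theorem IsMayaFun.chargeFun_comp_sub (hf : IsMayaFun f) (t : ℤ) :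
    chargeFun (fun j => f (j - t)) = chargeFun f - t := by
  have hpre : ∀ P : ℤ → Prop, {j | P (j - t)}.ncard = {i | P i}.ncard := fun P =>
    Set.ncard_preimage_of_injective_subset_range (f := fun j => j - t) (sub_left_injective)
      (fun i _ => ⟨i + t, add_sub_cancel_right i t⟩)
  have h₁ := hpre fun i => i < -t ∧ f i = -1
  have h₂ := hpre fun i => -t ≤ i ∧ f i = 1
  simp only [sub_lt_iff_lt_add, neg_add_cancel, le_sub_iff_add_le] at h₁ h₂
  rw [sub_eq_add_neg, ← hf.chargeAt_eq, chargeFun, chargeAt, ← h₁, ← h₂]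

theorem IsMayaFun.chargeFun_eq_neg_of_forall (hf : IsMayaFun f) {t : ℤ}
    (h : ∀ k, f k = 1 ↔ k < t) : chargeFun f = -t := by
  have hcut : chargeAt f t = 0 := by
    have h₁ : {j | j < t ∧ f j = -1} = ∅ :=
      Set.eq_empty_iff_forall_notMem.2 fun j ⟨hj, hfj⟩ => by have := (h j).2 hj; omega
    have h₂ : {j | t ≤ j ∧ f j = 1} = ∅ :=
      Set.eq_empty_iff_forall_notMem.2 fun j ⟨hj, hfj⟩ => by have := (h j).1 hfj; omega
    simp [chargeAt, h₁, h₂]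
  have := hf.chargeAt_eq t
  omega

theorem IsMayaFun.not_exists_descent_iff (hf : IsMayaFun f) :
    (¬∃ k, f k = 1 ∧ f (k - 1) = -1) ↔ ∀ k, f k = 1 ↔ k < -chargeFun f := by
  constructor
  · intro hnd
    have hdown : ∀ k, f k = 1 → ∀ m ≤ k, f m = 1 := fun k hk =>
      Int.leInductionDown hk fun n _ hn => (hf.1 (n - 1)).resolve_right fun h => hnd ⟨n, hn, h⟩
    obtain ⟨N, hN⟩ := hf.2.1
    obtain ⟨M, hM⟩ := hf.2.2
    obtain ⟨t, ht, htmax⟩ := Int.exists_greatest_of_bdd (P := fun k => f k = 1)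
      ⟨N, fun k hk => by by_contra! h; have := hN k h.le; omega⟩ ⟨M, hM M le_rfl⟩
    have hstep : ∀ k, f k = 1 ↔ k < t + 1 := fun k =>
      ⟨fun hk => by have := htmax k hk; omega, fun hk => hdown t ht k (by omega)⟩
    rw [hf.chargeFun_eq_neg_of_forall hstep, neg_neg]
    exact hstep
  · rintro h ⟨k, hk, hk'⟩
    have := (h k).1 hk
    have := (h (k - 1)).2 (by omega)
    omega

end MayaFunction

section PartitionCharge

theorem isMayaFun_mayaFun (lam : YPartition) : IsMayaFun (mayaFun lam) := by
  obtain ⟨N, hN⟩ := lam.eventually_zero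
  refine ⟨mayaFun_eq_one_or lam, ⟨N, fun j hj => ?_⟩, ⟨-(lam.part 0 : ℤ) - 1, fun j hj => ?_⟩⟩
  · rw [mayaFun_eq_neg_one_iff]
    exact ⟨j.toNat, by rw [hN _ (by omega)]; omega⟩
  · refine (mayaFun_eq_one_or lam j).resolve_right fun h => ?_
    obtain ⟨b, rfl⟩ := (mayaFun_eq_neg_one_iff lam _).1 h
    have := lam.antitone 0 b b.zero_le
    omega

theorem chargeFun_mayaFun (lam : YPartition) : chargeFun (mayaFun lam) = 0 := by
  obtain ⟨N, hN⟩ := lam.eventually_zero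
  have h₁ : {j | j < (N : ℤ) ∧ mayaFun lam j = -1} =
      (fun b : ℕ => (b : ℤ) - lam.part b) '' Set.Iio N := by
    ext j
    simp only [Set.mem_ofPred, mayaFun_eq_neg_one_iff, Set.mem_image, Set.mem_Iio]
    constructor
    · rintro ⟨hj, b, rfl⟩
      refine ⟨b, ?_, rfl⟩
      by_contra! h
      rw [hN b h] at hj
      omega
    · rintro ⟨b, hb, rfl⟩
      exact ⟨by omega, b, rfl⟩
  have h₂ : {j | (N : ℤ) ≤ j ∧ mayaFun lam j = 1} = ∅ :=
    Set.eq_empty_iff_forall_notMem.2 fun j ⟨hj, h⟩ => by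
      have : mayaFun lam j = -1 :=
        (mayaFun_eq_neg_one_iff lam j).2 ⟨j.toNat, by rw [hN _ (by omega)]; omega⟩
      omega
  have := (isMayaFun_mayaFun lam).chargeAt_eq N
  rw [chargeAt, h₁, h₂, Set.ncard_image_of_injective _ (strictMono_sub_part lam).injective,
    Set.ncard_Iio_nat, Set.ncard_empty] at this
  omega

theorem IsMayaFun.exists_mayaFun_eq {f : ℤ → ℤ} (hf : IsMayaFun f) (hc : chargeFun f = 0) :
    ∃ lam : YPartition, mayaFun lam = f := by
  obtain ⟨N, hN⟩ := hf.2.1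
  obtain ⟨L, hL⟩ := hf.2.2
  have hL' : ∀ j, f j = -1 → L < j := fun j hj => by
    by_contra! h
    have := hL j h
    omega
  set p : ℕ → Prop := fun n => f (L + n) = -1
  have hp : (Set.ofPred p).Infinite := Set.infinite_of_forall_exists_gt fun n =>
    ⟨max (n + 1) (N - L).toNat, hN _ (by omega), by omega⟩
  -- `pos b` is the position of the `b`-th `-1` of `f`; charge `0` at the cut `pos b` says that
  -- `b - λ_b = pos b` when `λ_b` counts the `+1`s to its right
  set pos : ℕ → ℤ := fun b => L + Nat.nth p b
  have hpos : StrictMono pos := fun a b hab => by simp [pos, Nat.nth_strictMono hp hab]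
  set part : ℕ → ℕ := fun b => {j | pos b ≤ j ∧ f j = 1}.ncard
  have hpart : ∀ b : ℕ, (b : ℤ) - part b = pos b := by
    intro b
    have := hf.chargeAt_eq (pos b)
    rw [chargeAt, ncard_lt_add_eq_count (fun j hj => (hL' j hj).le), Nat.count_nth_of_infinite hp,
      hc] at this
    simp only [part]
    omega
  have hanti : ∀ a b : ℕ, a ≤ b → part b ≤ part a := fun a b hab =>
    Set.ncard_le_ncard (fun j ⟨hj, hfj⟩ => ⟨(hpos.monotone hab).trans hj, hfj⟩) (hf.finite_ge _)
  have hzero : ∀ b : ℕ, (N - L).toNat ≤ b → part b = 0 := by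
    intro b hb
    have := (Nat.nth_strictMono hp).id_le b
    refine (Set.ncard_eq_zero (hf.finite_ge _)).2 (Set.eq_empty_iff_forall_notMem.2 ?_)
    rintro j ⟨hj, hfj⟩
    have := hN j (by simp only [pos, id] at this hj; omega)
    omega
  refine ⟨⟨part, hanti, _, hzero⟩, funext_of_eq_neg_one_iff (mayaFun_eq_one_or _) hf.1 fun j => ?_⟩
  rw [mayaFun_eq_neg_one_iff]
  change (∃ b : ℕ, (b : ℤ) - part b = j) ↔ _
  simp only [hpart, pos]
  constructor
  · rintro ⟨b, rfl⟩
    exact Nat.nth_mem_of_infinite hp b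
  · intro hj
    have := hL' j hj
    obtain ⟨b, hb⟩ : (j - L).toNat ∈ Set.range (Nat.nth p) := by
      rw [Nat.range_nth_of_infinite hp]
      show f (L + (j - L).toNat) = -1
      rwa [Int.toNat_of_nonneg (by omega), add_sub_cancel]
    exact ⟨b, by omega⟩

theorem IsMayaFun.mayaFun_partitionOfMaya {f : ℤ → ℤ} (hf : IsMayaFun f) (hc : chargeFun f = 0) :
    mayaFun (partitionOfMaya f) = f := by
  have h := hf.exists_mayaFun_eq hc
  rw [partitionOfMaya, dif_pos h]
  exact h.choose_spec

end PartitionCharge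

section Residue

variable {ℓ : ℕ}

theorem add_mul_nonneg_iff (i : Fin ℓ) (k : ℤ) : 0 ≤ (i : ℤ) + k * ℓ ↔ 0 ≤ k := by
  have := i.is_lt
  constructor <;> intro h <;> nlinarith

variable [NeZero ℓ]

theorem divModEquiv_add_mul (i : Fin ℓ) (k : ℤ) :
    Int.divModEquiv ℓ ((i : ℤ) + k * ℓ) = (k, i) := by
  have := (Int.divModEquiv ℓ).apply_symm_apply (k, i)
  rwa [Int.divModEquiv_symm_apply, add_comm] at this

theorem residue_add_quotient_mul (j : ℤ) :
    ((Int.divModEquiv ℓ j).2 : ℤ) + (Int.divModEquiv ℓ j).1 * ℓ = j := by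
  rw [add_comm, ← Int.divModEquiv_symm_apply, Equiv.symm_apply_apply]

theorem funext_residue {f g : ℤ → ℤ}
    (h : ∀ (i : Fin ℓ) (k : ℤ), f (i + k * ℓ) = g (i + k * ℓ)) : f = g :=
  funext fun j => by rw [← residue_add_quotient_mul (ℓ := ℓ) j]; exact h _ _

theorem ncard_eq_sum_ncard_residue {S : Set ℤ} (hS : S.Finite) :
    S.ncard = ∑ i : Fin ℓ, {k : ℤ | (i : ℤ) + k * ℓ ∈ S}.ncard := by
  have hslice : ∀ i : Fin ℓ, {k : ℤ | (i : ℤ) + k * ℓ ∈ S}.ncard =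
      (S ∩ {j | (Int.divModEquiv ℓ j).2 = i}).ncard := by
    intro i
    have hinj : Function.Injective fun k : ℤ => (i : ℤ) + k * ℓ := fun a b h => by
      simpa [NeZero.ne] using h
    rw [← Set.ncard_image_of_injective _ hinj]
    congr 1
    ext j
    simp only [Set.mem_image, Set.mem_ofPred, Set.mem_inter_iff]
    constructor
    · rintro ⟨k, hk, rfl⟩
      rw [divModEquiv_add_mul]
      exact ⟨hk, rfl⟩
    · rintro ⟨hj, rfl⟩
      exact ⟨_, by rwa [residue_add_quotient_mul], residue_add_quotient_mul j⟩
  rw [Finset.sum_congr rfl fun i _ => hslice i, ← finsum_eq_sum_of_fintype,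
    ← Set.ncard_iUnion_of_finite (fun _ => hS.inter_of_left _)]
  · congr
    ext j
    simp
  · exact fun a b hab => Set.disjoint_left.2 fun j ha hb => hab (ha.2.symm.trans hb.2)

variable {f : ℤ → ℤ}

theorem IsMayaFun.comp_add_mul (hf : IsMayaFun f) (i : ℤ) : IsMayaFun fun k => f (i + k * ℓ) := by
  obtain ⟨hval, ⟨N, hN⟩, ⟨M, hM⟩⟩ := hf
  have hℓ : (1 : ℤ) ≤ ℓ := by exact_mod_cast Nat.one_le_iff_ne_zero.2 (NeZero.ne ℓ)
  refine ⟨fun k => hval _, ⟨max (N - i) 0, fun k hk => hN _ ?_⟩,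
    ⟨min (M - i) 0, fun k hk => hM _ ?_⟩⟩
  · have := le_max_left (N - i) 0
    have := le_max_right (N - i) 0
    nlinarith
  · have := min_le_left (M - i) 0
    have := min_le_right (M - i) 0
    nlinarith

theorem IsMayaFun.chargeFun_eq_sum_residue (hf : IsMayaFun f) :
    chargeFun f = ∑ i : Fin ℓ, chargeFun fun k => f (i + k * ℓ) := by
  simp only [chargeFun, Finset.sum_sub_distrib]
  rw [ncard_eq_sum_ncard_residue (ℓ := ℓ) (hf.finite_lt 0),
    ncard_eq_sum_ncard_residue (ℓ := ℓ) (hf.finite_ge 0)]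
  push_cast
  simp only [Set.mem_ofPred, add_mul_nonneg_iff, ← not_le]

theorem sum_chargeQuot (lam : YPartition) : ∑ i : Fin ℓ, chargeQuot ℓ lam i = 0 := by
  rw [← chargeFun_mayaFun lam, (isMayaFun_mayaFun lam).chargeFun_eq_sum_residue (ℓ := ℓ)]
  rfl

theorem quotComp_eq_emptyPartition_iff (lam : YPartition) (i : ℤ) :
    quotComp ℓ lam i = emptyPartition ↔
      ∀ k, mayaFun lam (i + k * ℓ) = 1 ↔ k < -chargeQuot ℓ lam i := by
  have hres := (isMayaFun_mayaFun lam).comp_add_mul (ℓ := ℓ) i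
  have hQ : mayaFun (quotComp ℓ lam i) =
      fun j => mayaFun lam (i + (j - chargeQuot ℓ lam i) * ℓ) :=
    (hres.comp_sub _).mayaFun_partitionOfMaya (by rw [hres.chargeFun_comp_sub]; exact sub_self _)
  rw [← mayaFun_injective.eq_iff, hQ, mayaFun_emptyPartition, funext_iff]
  constructor
  · intro h k
    have := h (k + chargeQuot ℓ lam i)
    rw [add_sub_cancel_right] at this
    rw [this]
    split_ifs <;> simp <;> omega
  · intro h j
    split_ifs with hj
    · exact (h _).2 (by omega)
    · exact (hres.1 _).resolve_left fun h₁ => by have := (h _).1 h₁; omega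

end Residue

section YoungDiagram

variable {mu lam : YPartition}

theorem memYD_iff (lam : YPartition) (a : ℤ) (r : ℕ) :
    Partition.memYD lam (a, r + 1) ↔ 1 ≤ a ∧ a ≤ lam.part r := by
  simp [Partition.memYD]

theorem skewMem_iff (mu lam : YPartition) (a : ℤ) (r : ℕ) :
    SkewMem mu lam (a, r + 1) ↔ (mu.part r : ℤ) < a ∧ a ≤ lam.part r := by
  rw [SkewMem, memYD_iff, memYD_iff]
  omega

theorem exists_row_eq {x : ℤ × ℤ} (h : 1 ≤ x.2) : ∃ r : ℕ, x = (x.1, (r : ℤ) + 1) :=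
  ⟨(x.2 - 1).toNat, by ext <;> simp; omega⟩

theorem sub_iff : Sub mu lam ↔ ∀ r, mu.part r ≤ lam.part r := by
  constructor
  · intro h r
    by_contra! hr
    have := (memYD_iff lam _ r).1 (h _ ((memYD_iff mu (mu.part r) r).2 ⟨by omega, le_rfl⟩))
    omega
  · intro h x hx
    obtain ⟨r, hr⟩ := exists_row_eq hx.2.1
    rw [hr, memYD_iff] at hx ⊢
    have := h r
    omega

theorem skewSize_eq_sum (hle : ∀ r, mu.part r ≤ lam.part r) {D : ℕ}
    (hD : ∀ r, D ≤ r → mu.part r = lam.part r) :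
    skewSize mu lam = ∑ r ∈ Finset.range D, (lam.part r - mu.part r) := by
  have hrow : ∀ r : ℕ, Function.Injective fun a : ℤ => (a, (r : ℤ) + 1) := fun r a a' h => by
    simpa using h
  have hset : {x | SkewMem mu lam x} =
      ⋃ r ∈ (Finset.range D : Set ℕ),
        (fun a : ℤ => (a, (r : ℤ) + 1)) '' Set.Ioc (mu.part r : ℤ) (lam.part r) := by
    ext x
    simp only [Set.mem_ofPred, Set.mem_iUnion, Finset.coe_range, Set.mem_Iio, Set.mem_image,
      Set.mem_Ioc, exists_prop]
    constructor
    · intro hx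
      obtain ⟨r, hr⟩ := exists_row_eq hx.1.2.1
      rw [hr, skewMem_iff] at hx
      refine ⟨r, ?_, x.1, hx, hr.symm⟩
      by_contra! h
      rw [hD r h] at hx
      omega
    · rintro ⟨r, -, a, ha, rfl⟩
      exact (skewMem_iff mu lam a r).2 ha
  rw [skewSize, hset, Set.Finite.ncard_biUnion (Finset.finite_toSet _)
    (fun r _ => (Set.finite_Ioc _ _).image _), finsum_mem_coe_finset]
  · refine Finset.sum_congr rfl fun r _ => ?_
    rw [Set.ncard_image_of_injective _ (hrow r), ← Finset.coe_Ioc, Set.ncard_coe_finset,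
      Int.card_Ioc]
    have := hle r
    omega
  · intro r _ r' _ hrr'
    refine Set.disjoint_left.2 ?_
    rintro _ ⟨a, -, rfl⟩ ⟨a', -, h⟩
    simp only [Prod.mk.injEq] at h
    omega

end YoungDiagram

section RimHook

variable {mu lam : YPartition} {b d : ℕ}

/-- `λ ∖ μ` is a border strip occupying the rows `b, …, d` (indexed from `0`). -/
structure IsRimHook (mu lam : YPartition) (b d : ℕ) : Prop where
  le : b ≤ d
  part_eq_of_lt : ∀ r < b, mu.part r = lam.part r
  part_add_one : ∀ r, b ≤ r → r < d → mu.part r + 1 = lam.part (r + 1)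
  part_lt : mu.part d < lam.part d
  part_eq_of_gt : ∀ r, d < r → mu.part r = lam.part r

def SkewAdj (mu lam : YPartition) (x y : ℤ × ℤ) : Prop :=
  SkewMem mu lam x ∧ SkewMem mu lam y ∧ adjacent x y

instance : Std.Symm (SkewAdj mu lam) where
  symm _ _ := fun ⟨hx, hy, h⟩ => ⟨hy, hx, by unfold adjacent at h ⊢; omega⟩

theorem reflTransGen_skewAdj_row_of_le {r : ℕ} {a a' : ℤ} (ha : (mu.part r : ℤ) < a)
    (ha' : a' ≤ lam.part r) (h : a ≤ a') :
    Relation.ReflTransGen (SkewAdj mu lam) (a, (r : ℤ) + 1) (a', (r : ℤ) + 1) := by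
  induction a', h using Int.leInduction with
  | base => exact .refl
  | succ n hn ih =>
    refine (ih (by omega)).tail ⟨?_, ?_, by simp [adjacent]⟩ <;> rw [skewMem_iff] <;> omega

theorem reflTransGen_skewAdj_row_of_mem {r : ℕ} {a a' : ℤ} (ha : (mu.part r : ℤ) < a)
    (ha' : a ≤ lam.part r) (hb : (mu.part r : ℤ) < a') (hb' : a' ≤ lam.part r) :
    Relation.ReflTransGen (SkewAdj mu lam) (a, (r : ℤ) + 1) (a', (r : ℤ) + 1) := by
  rcases le_total a a' with h | h
  · exact reflTransGen_skewAdj_row_of_le ha hb' h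
  · exact Std.Symm.symm _ _ (reflTransGen_skewAdj_row_of_le hb ha' h)

namespace IsRimHook

variable (h : IsRimHook mu lam b d)
include h

theorem part_le (r : ℕ) : mu.part r ≤ lam.part r := by
  rcases lt_trichotomy r d with hr | rfl | hr
  · rcases lt_or_ge r b with hb | hb
    · exact (h.part_eq_of_lt r hb).le
    · have := h.part_add_one r hb hr
      have := lam.antitone r (r + 1) r.le_succ
      omega
  · exact h.part_lt.le
  · exact (h.part_eq_of_gt r hr).le

theorem part_lt_of_mem {r : ℕ} (hb : b ≤ r) (hd : r ≤ d) : mu.part r < lam.part r := by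
  rcases hd.lt_or_eq with hr | rfl
  · have := h.part_add_one r hb hr
    have := lam.antitone r (r + 1) r.le_succ
    omega
  · exact h.part_lt

theorem mem_of_part_lt {r : ℕ} (hr : mu.part r < lam.part r) : b ≤ r ∧ r ≤ d := by
  constructor <;> by_contra! h'
  · exact hr.ne (h.part_eq_of_lt r h')
  · exact hr.ne (h.part_eq_of_gt r h')

theorem skewSize_eq : (skewSize mu lam : ℤ) = lam.part b - mu.part d + d - b := by
  have hpartial : ∀ r, b ≤ r → r ≤ d →
      ((∑ k ∈ Finset.range r, (lam.part k - mu.part k) : ℕ) : ℤ) =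
        lam.part b - lam.part r + r - b := by
    intro r hbr hrd
    induction r, hbr using Nat.le_induction with
    | base =>
      rw [Finset.sum_eq_zero fun k hk => by rw [h.part_eq_of_lt k (Finset.mem_range.1 hk)]; simp]
      simp
    | succ r hbr ih =>
      rw [Finset.sum_range_succ, Nat.cast_add, ih (by omega)]
      have := h.part_add_one r hbr (by omega)
      have := h.part_le r
      push_cast
      omega
  rw [skewSize_eq_sum h.part_le (D := d + 1) fun r hr => h.part_eq_of_gt r hr,
    Finset.sum_range_succ, Nat.cast_add, hpartial d h.le le_rfl]
  have := h.part_lt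
  omega

theorem reflTransGen_anchor {r : ℕ} (hb : b ≤ r) (hd : r ≤ d) :
    Relation.ReflTransGen (SkewAdj mu lam) (lam.part r, (r : ℤ) + 1) (lam.part b, (b : ℤ) + 1) := by
  induction r, hb using Nat.le_induction with
  | base => exact .refl
  | succ r hbr ih =>
    have hstep := h.part_add_one r hbr (by omega)
    have hlt := h.part_lt_of_mem (r := r + 1) (by omega) hd
    have := lam.antitone r (r + 1) r.le_succ
    have hdown : SkewAdj mu lam (lam.part (r + 1), ((r + 1 : ℕ) : ℤ) + 1)
        (lam.part (r + 1), (r : ℤ) + 1) :=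
      ⟨(skewMem_iff _ _ _ _).2 ⟨by omega, le_rfl⟩, (skewMem_iff _ _ _ _).2 ⟨by omega, by omega⟩,
        by simp [adjacent]⟩
    exact (Relation.ReflTransGen.single hdown).trans
      ((reflTransGen_skewAdj_row_of_mem (by omega) (by omega) (by omega) le_rfl).trans
        (ih (by omega)))

theorem isBorderStrip : IsBorderStrip mu lam := by
  have hanchor : ∀ x, SkewMem mu lam x →
      Relation.ReflTransGen (SkewAdj mu lam) x (lam.part b, (b : ℤ) + 1) := by
    intro x hx
    obtain ⟨r, hr⟩ := exists_row_eq hx.1.2.1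
    rw [hr, skewMem_iff] at hx
    obtain ⟨hbr, hrd⟩ := h.mem_of_part_lt (r := r) (by omega)
    rw [hr]
    exact (reflTransGen_skewAdj_row_of_le hx.1 le_rfl hx.2).trans (h.reflTransGen_anchor hbr hrd)
  refine ⟨sub_iff.2 h.part_le, ⟨(mu.part d + 1, (d : ℤ) + 1), ?_⟩, fun x y hx hy =>
    (hanchor x hx).trans (Std.Symm.symm _ _ (hanchor y hy)), ?_⟩
  · rw [skewMem_iff]
    have := h.part_lt
    omega
  · rintro ⟨a, c, h₁, -, h₂, h₃⟩
    obtain ⟨r, hr⟩ := exists_row_eq h₁.1.2.1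
    simp only [Prod.mk.injEq] at hr
    rw [hr.2, skewMem_iff] at h₁
    have e : (r : ℤ) + 1 + 1 = ((r + 1 : ℕ) : ℤ) + 1 := by push_cast; ring
    rw [hr.2, e, skewMem_iff] at h₂ h₃
    obtain ⟨hbr, -⟩ := h.mem_of_part_lt (r := r) (by omega)
    obtain ⟨-, hrd⟩ := h.mem_of_part_lt (r := r + 1) (by omega)
    have := h.part_add_one r hbr (by omega)
    omega

theorem mayaFun_eq_one : mayaFun lam ((d : ℤ) - mu.part d) = 1 := by
  have hd := h.part_lt
  have := h.part_eq_of_gt (d + 1) d.lt_succ_self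
  have := mu.antitone d (d + 1) d.le_succ
  rw [mayaFun_eq_one_iff]
  refine ⟨mu.part d, ?_⟩
  rw [conj_eq_succ lam (n := d) (by omega) (by omega) (by omega)]
  push_cast
  ring

end IsRimHook

end RimHook

section BorderStrip

variable {mu lam : YPartition}

theorem exists_skewMem_of_reflTransGen {x y : ℤ × ℤ}
    (hxy : Relation.ReflTransGen (SkewAdj mu lam) x y) {m : ℤ} (hx : x.2 ≤ m) (hy : m < y.2) :
    ∃ a, SkewMem mu lam (a, m) ∧ SkewMem mu lam (a, m + 1) := by
  induction hxy using Relation.ReflTransGen.head_induction_on with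
  | refl => omega
  | @head x z hxz _ ih =>
    obtain ⟨hx', hz, hadj⟩ := hxz
    rcases le_or_gt z.2 m with hzm | hzm
    · exact ih hzm
    · unfold adjacent at hadj
      refine ⟨x.1, ?_, ?_⟩
      · convert hx' using 2
        omega
      · convert hz using 2 <;> omega

theorem IsBorderStrip.part_add_one_eq (h : IsBorderStrip mu lam) {a : ℤ} {r : ℕ}
    (h₁ : SkewMem mu lam (a, (r : ℤ) + 1)) (h₂ : SkewMem mu lam (a, (r : ℤ) + 1 + 1)) :
    mu.part r + 1 = lam.part (r + 1) := by
  have e : (r : ℤ) + 1 + 1 = ((r + 1 : ℕ) : ℤ) + 1 := by push_cast; ring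
  rw [skewMem_iff] at h₁
  rw [e, skewMem_iff] at h₂
  have := lam.antitone r (r + 1) r.le_succ
  have := mu.antitone r (r + 1) r.le_succ
  by_contra hne
  refine h.2.2.2 ⟨lam.part (r + 1) - 1, (r : ℤ) + 1, ?_, ?_, ?_, ?_⟩ <;>
    simp only [sub_add_cancel, e, skewMem_iff] <;> omega

theorem IsBorderStrip.exists_isRimHook (h : IsBorderStrip mu lam) :
    ∃ b d, IsRimHook mu lam b d := by
  have hle := sub_iff.1 h.1
  obtain ⟨x, hx⟩ := h.2.1
  obtain ⟨N, hN⟩ := lam.eventually_zero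
  have hbound : ∀ r, mu.part r < lam.part r → r ≤ N := fun r hr => by
    by_contra! h'
    rw [hN r h'.le] at hr
    omega
  obtain ⟨r₀, hr₀⟩ := exists_row_eq hx.1.2.1
  have hex : ∃ r, mu.part r < lam.part r := ⟨r₀, by rw [hr₀, skewMem_iff] at hx; omega⟩
  set b := Nat.find hex
  set d := Nat.findGreatest (fun r => mu.part r < lam.part r) N
  have hb : mu.part b < lam.part b := Nat.find_spec hex
  have hd : mu.part d < lam.part d :=
    Nat.findGreatest_spec (P := fun r => mu.part r < lam.part r) (hbound _ hb) hb
  have hbd : b ≤ d := Nat.find_min' hex hd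
  refine ⟨b, d, hbd, fun r hr => ?_, fun r hbr hrd => ?_, hd, fun r hr => ?_⟩
  · have := Nat.find_min hex hr
    have := hle r
    omega
  · have hstart : SkewMem mu lam (mu.part b + 1, (b : ℤ) + 1) := by rw [skewMem_iff]; omega
    have hend : SkewMem mu lam (mu.part d + 1, (d : ℤ) + 1) := by rw [skewMem_iff]; omega
    obtain ⟨a, h₁, h₂⟩ := exists_skewMem_of_reflTransGen (h.2.2.1 _ _ hstart hend)
      (m := (r : ℤ) + 1) (by simpa using hbr) (by simp; omega)
    exact h.part_add_one_eq h₁ h₂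
  · by_contra hne
    have hr' : mu.part r < lam.part r := by have := hle r; omega
    have := Nat.le_findGreatest (P := fun r => mu.part r < lam.part r) (hbound r hr') hr'
    omega

end BorderStrip

section Core

variable {lam : YPartition}

theorem IsBorderStrip.exists_mayaFun {mu : YPartition} (h : IsBorderStrip mu lam) :
    ∃ j, mayaFun lam j = 1 ∧ mayaFun lam (j - skewSize mu lam) = -1 := by
  obtain ⟨b, d, hh⟩ := h.exists_isRimHook
  refine ⟨d - mu.part d, hh.mayaFun_eq_one, (mayaFun_eq_neg_one_iff lam _).2 ⟨b, ?_⟩⟩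
  rw [hh.skewSize_eq]
  ring

theorem exists_isRimHook {a b d : ℕ} (hbd : b ≤ d) (hd : a < lam.part d)
    (hd' : lam.part (d + 1) ≤ a) : ∃ mu, IsRimHook mu lam b d ∧ mu.part d = a := by
  have hA : ∀ r ≤ d, a + 1 ≤ lam.part r := fun r hr => by
    have := lam.antitone r d hr
    omega
  have hA' : ∀ r, d < r → lam.part r < a + 1 := fun r hr => by
    have := lam.antitone (d + 1) r hr
    omega
  obtain ⟨N, hN⟩ := lam.eventually_zero
  -- `μ_r = λ_{r+1} - 1` for `b ≤ r < d` and `μ_d = a`: the `max` covers both cases, since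
  -- `a + 1 ≤ λ_{r+1}` exactly when `r < d`
  let mu : YPartition :=
    { part := fun r => if b ≤ r ∧ r ≤ d then max (lam.part (r + 1)) (a + 1) - 1 else lam.part r
      antitone := antitone_nat_of_succ_le fun r => by
        have := lam.antitone r (r + 1) r.le_succ
        have := lam.antitone (r + 1) (r + 1 + 1) (r + 1).le_succ
        have := hA r
        have := hA (r + 1)
        have := hA' (r + 1)
        split_ifs <;> omega
      eventually_zero := ⟨max N (d + 1), fun r hr => by
        rw [if_neg (by omega)]
        exact hN r (by omega)⟩ }
  have hmud : mu.part d = a := by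
    have := hA' (d + 1) d.lt_succ_self
    simp only [mu]
    rw [if_pos ⟨hbd, le_rfl⟩]
    omega
  refine ⟨mu, ⟨hbd, fun r hr => if_neg (by omega), fun r hbr hrd => ?_, by omega,
    fun r hr => if_neg (by omega)⟩, hmud⟩
  have := hA (r + 1) hrd
  simp only [mu]
  rw [if_pos ⟨hbr, hrd.le⟩]
  omega

theorem exists_isBorderStrip_of_mayaFun {j : ℤ} {ℓ : ℕ} (h₁ : mayaFun lam j = 1)
    (h₂ : mayaFun lam (j - ℓ) = -1) : ∃ mu, IsBorderStrip mu lam ∧ skewSize mu lam = ℓ := by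
  obtain ⟨a, rfl⟩ := (mayaFun_eq_one_iff lam j).1 h₁
  obtain ⟨b, hb⟩ := (mayaFun_eq_neg_one_iff lam _).1 h₂
  have hconj := lt_conj_iff lam (a := a + 1) (by omega)
  have hbD : b < conj lam (a + 1) := by
    by_contra! hc
    have := mt (hconj b).2 (by omega)
    omega
  obtain ⟨d, hd⟩ : ∃ d, conj lam (a + 1) = d + 1 := ⟨conj lam (a + 1) - 1, by omega⟩
  have hlt : a < lam.part d := (hconj d).1 (by omega)
  have hle : lam.part (d + 1) ≤ a := by
    by_contra! h
    have := (hconj (d + 1)).2 h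
    omega
  obtain ⟨mu, hmu, hmud⟩ := exists_isRimHook (b := b) (by omega) hlt hle
  refine ⟨mu, hmu.isBorderStrip, ?_⟩
  have := hmu.skewSize_eq
  omega

theorem isCore_iff_not_exists_mayaFun (ℓ : ℕ) (lam : YPartition) :
    IsCore ℓ lam ↔ ¬∃ j, mayaFun lam j = 1 ∧ mayaFun lam (j - ℓ) = -1 := by
  refine not_congr ⟨fun ⟨mu, hmu, hsize⟩ => ?_,
    fun ⟨j, h₁, h₂⟩ => exists_isBorderStrip_of_mayaFun h₁ h₂⟩
  rw [← hsize]
  exact hmu.exists_mayaFun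

variable {ℓ : ℕ} [NeZero ℓ]

theorem isCore_iff_forall_residue :
    IsCore ℓ lam ↔
      ∀ (i : Fin ℓ) (k : ℤ), mayaFun lam (i + k * ℓ) = 1 ↔ k < -chargeQuot ℓ lam i := by
  have hdescent : IsCore ℓ lam ↔ ∀ i : Fin ℓ,
      ¬∃ k : ℤ, mayaFun lam (i + k * ℓ) = 1 ∧ mayaFun lam (i + (k - 1) * ℓ) = -1 := by
    rw [isCore_iff_not_exists_mayaFun]
    constructor
    · rintro h i ⟨k, h₁, h₂⟩
      exact h ⟨_, h₁, by rwa [show (i : ℤ) + k * ℓ - ℓ = i + (k - 1) * ℓ by ring]⟩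
    · rintro h ⟨j, h₁, h₂⟩
      rw [← residue_add_quotient_mul (ℓ := ℓ) j] at h₁ h₂
      rw [show ∀ x y : ℤ, x + y * ℓ - ℓ = x + (y - 1) * ℓ by intros; ring] at h₂
      exact h _ ⟨_, h₁, h₂⟩
  exact hdescent.trans <| forall_congr' fun i =>
    ((isMayaFun_mayaFun lam).comp_add_mul (ℓ := ℓ) i).not_exists_descent_iff

def coreMaya (c : Fin ℓ → ℤ) (j : ℤ) : ℤ :=
  if (Int.divModEquiv ℓ j).1 < -c (Int.divModEquiv ℓ j).2 then 1 else -1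

theorem coreMaya_add_mul (c : Fin ℓ → ℤ) (i : Fin ℓ) (k : ℤ) :
    coreMaya c (i + k * ℓ) = if k < -c i then 1 else -1 := by
  rw [coreMaya, divModEquiv_add_mul]

theorem isMayaFun_coreMaya (c : Fin ℓ → ℤ) : IsMayaFun (coreMaya c) := by
  have hℓ : (0 : ℤ) < ℓ := by exact_mod_cast Nat.pos_of_neZero ℓ
  set B := ∑ i, |c i|
  have hB : ∀ i, |c i| ≤ B := fun i =>
    Finset.single_le_sum (fun i _ => abs_nonneg (c i)) (Finset.mem_univ i)
  have hq : ∀ j : ℤ, (Int.divModEquiv ℓ j).1 = j / ℓ := fun _ => rfl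
  refine ⟨fun j => by unfold coreMaya; split_ifs <;> simp, ⟨B * ℓ, fun j hj => ?_⟩,
    ⟨-B * ℓ - 1, fun j hj => ?_⟩⟩
  · have := (Int.le_ediv_iff_mul_le hℓ).2 hj
    have := neg_le_abs (c (Int.divModEquiv ℓ j).2)
    have := hB (Int.divModEquiv ℓ j).2
    rw [coreMaya, if_neg (by rw [hq]; omega)]
  · have := (Int.ediv_lt_iff_lt_mul hℓ).2 (show j < -B * ℓ by omega)
    have := le_abs_self (c (Int.divModEquiv ℓ j).2)
    have := hB (Int.divModEquiv ℓ j).2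
    rw [coreMaya, if_pos (by rw [hq]; omega)]

theorem chargeFun_coreMaya_residue (c : Fin ℓ → ℤ) (i : Fin ℓ) :
    chargeFun (fun k => coreMaya c (i + k * ℓ)) = c i := by
  rw [((isMayaFun_coreMaya c).comp_add_mul (i : ℤ)).chargeFun_eq_neg_of_forall (t := -c i)
    fun k => by rw [coreMaya_add_mul]; split_ifs <;> simp [*], neg_neg]

theorem chargeFun_coreMaya (c : Fin ℓ → ℤ) : chargeFun (coreMaya c) = ∑ i, c i := by
  rw [(isMayaFun_coreMaya c).chargeFun_eq_sum_residue (ℓ := ℓ)]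
  exact Finset.sum_congr rfl fun i _ => chargeFun_coreMaya_residue c i

theorem IsCore.eq_of_chargeQuot_eq {lam' : YPartition} (hlam : IsCore ℓ lam)
    (hlam' : IsCore ℓ lam') (h : ∀ i : Fin ℓ, chargeQuot ℓ lam i = chargeQuot ℓ lam' i) :
    lam = lam' := by
  refine mayaFun_injective (funext_residue (ℓ := ℓ) fun i k => ?_)
  have := isCore_iff_forall_residue.1 hlam i k
  have := isCore_iff_forall_residue.1 hlam' i k
  have := h i
  have := mayaFun_eq_one_or lam (i + k * ℓ)
  have := mayaFun_eq_one_or lam' (i + k * ℓ)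
  omega

theorem exists_isCore_chargeQuot_eq {c : Fin ℓ → ℤ} (hc : ∑ i, c i = 0) :
    ∃ lam, IsCore ℓ lam ∧ ∀ i : Fin ℓ, chargeQuot ℓ lam i = c i := by
  obtain ⟨lam, hlam⟩ := (isMayaFun_coreMaya c).exists_mayaFun_eq ((chargeFun_coreMaya c).trans hc)
  have hcharge : ∀ i : Fin ℓ, chargeQuot ℓ lam i = c i := fun i => by
    rw [chargeQuot, hlam, chargeFun_coreMaya_residue]
  refine ⟨lam, isCore_iff_forall_residue.2 fun i k => ?_, hcharge⟩
  rw [hcharge, hlam, coreMaya_add_mul]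
  split_ifs <;> simp [*]

end Core

end Wreath

theorem core_iff_empty_quotient (ℓ : ℕ) (hℓ : 1 ≤ ℓ) :
    (∀ lam : YPartition,
      IsCore ℓ lam ↔ ∀ i : Fin ℓ, quotComp ℓ lam ((i : ℕ) : ℤ) = emptyPartition) ∧
    Set.BijOn (fun lam : YPartition => fun i : Fin ℓ => chargeQuot ℓ lam ((i : ℕ) : ℤ))
      {lam : YPartition | IsCore ℓ lam}
      {c : Fin ℓ → ℤ | ∑ i : Fin ℓ, c i = 0} := by
  have : NeZero ℓ := ⟨by omega⟩
  refine ⟨fun lam => isCore_iff_forall_residue.trans <|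
    forall_congr' fun i => (quotComp_eq_emptyPartition_iff lam i).symm, ?_, ?_, ?_⟩
  · exact fun lam _ => sum_chargeQuot lam
  · exact fun lam hlam lam' hlam' h => hlam.eq_of_chargeQuot_eq hlam' (congrFun h)
  · intro c hc
    obtain ⟨lam, hcore, hcharge⟩ := exists_isCore_chargeQuot_eq hc
    exact ⟨lam, hcore, funext hcharge⟩
end

section
/- Fix ℓ ≥ 1 and let λ ⊆ μ be partitions. If for all i, i′ ∈ ℤ/ℓℤ the number of nodes of μ∖λ whose content is ≡ i (mod ℓ) equals the number of nodes of μ∖λ whose content is ≡ i′ (mod ℓ), then core(μ) = core(λ). -/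
namespace Wreath

attribute [local instance] Classical.propDecidable

end Wreath

open Wreath

/-!
Number the beads of the Maya diagram of `ν` by columns: the bead of column `a` sits at
`ᵗν_a − a`. Passing from `λ` to `μ ⊇ λ` moves the bead of column `a` to the right across exactly
the contents of the nodes of `μ∖λ` in column `a`. Summing over columns, the number of beads of `μ`
on runner `r` (positions `≡ r mod ℓ`) among the first `K` equals that of `λ` plus
`n_r − n_{r+1}`, where `n_r` counts the nodes of `μ∖λ` of content `≡ r`. For `K = Mℓ` large, the
charge `c_r` is `M` minus this bead count, so equal residue counts give equal charges, and the
core depends on the charges only.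
-/

namespace Wreath

open Finset

section Conjugate

variable (ν : YPartition)

theorem lt_conj_succ_iff (a k : ℕ) : k < conj ν (a + 1) ↔ a < ν.part k := by
  obtain ⟨N, hN⟩ := ν.eventually_zero
  have hne : {k | ν.part k ≤ a}.Nonempty := ⟨N, by simp [hN N le_rfl]⟩
  have hIio : {k : ℕ | a + 1 ≤ ν.part k} = Set.Iio (sInf {k | ν.part k ≤ a}) := by
    ext k
    simp only [Set.mem_ofPred_eq, Set.mem_Iio]
    constructor
    · intro hk
      by_contra! hle
      have hmem : ν.part (sInf {k | ν.part k ≤ a}) ≤ a := Nat.sInf_mem hne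
      have := ν.antitone _ _ hle
      omega
    · intro hk
      simpa using Nat.notMem_of_lt_sInf hk
  have hconj : conj ν (a + 1) = sInf {k | ν.part k ≤ a} := by
    rw [conj, hIio, ← coe_Iio, Set.ncard_coe_finset, Nat.card_Iio]
  rw [hconj, ← Set.mem_Iio, ← hIio, Set.mem_ofPred_eq, Nat.add_one_le_iff]

theorem conj_succ_le_of_part_le {a N : ℕ} (h : ν.part N ≤ a) : conj ν (a + 1) ≤ N :=
  not_lt.1 fun hlt => absurd ((lt_conj_succ_iff ν a N).1 hlt) (not_lt.2 h)

theorem conj_succ_succ_le (a : ℕ) : conj ν (a + 1 + 1) ≤ conj ν (a + 1) :=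
  not_lt.1 fun hlt => lt_irrefl _ <|
    (lt_conj_succ_iff ν a _).2 (Nat.lt_of_succ_lt ((lt_conj_succ_iff ν (a + 1) _).1 hlt))

theorem memYD_iff_lt_conj (a k : ℕ) :
    Partition.memYD ν ((a + 1 : ℤ), (k + 1 : ℤ)) ↔ k < conj ν (a + 1) := by
  rw [lt_conj_succ_iff]
  simp only [Partition.memYD, add_sub_cancel_right, Int.toNat_natCast]
  omega

theorem conj_le_conj_of_sub {lam mu : YPartition} (hsub : Sub lam mu) (a : ℕ) :
    conj lam (a + 1) ≤ conj mu (a + 1) := by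
  by_contra! hlt
  have hmu := hsub _ ((memYD_iff_lt_conj lam a _).2 hlt)
  exact lt_irrefl _ ((memYD_iff_lt_conj mu a _).1 hmu)

end Conjugate

section Beads

variable (ν : YPartition)

/-- The `a`-th bead (from `0`) of `mayaFun ν`, coming from column `a + 1`. -/
noncomputable def bead (a : ℕ) : ℤ := conj ν (a + 1) - (a + 1 : ℤ)

theorem mayaFun_eq_one_iff_s7 (x : ℤ) : mayaFun ν x = 1 ↔ ∃ a, x = bead ν a := by
  unfold mayaFun bead
  split_ifs with h <;> simp [h]

theorem mayaFun_eq_one_or_eq_neg_one (x : ℤ) : mayaFun ν x = 1 ∨ mayaFun ν x = -1 := by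
  unfold mayaFun
  split_ifs <;> simp

theorem bead_strictAnti : StrictAnti (bead ν) :=
  strictAnti_nat_of_succ_lt fun a => by
    have := conj_succ_succ_le ν a
    simp only [bead]
    push_cast
    omega

theorem neg_le_bead (a : ℕ) : -(a + 1 : ℤ) ≤ bead ν a := by
  simp only [bead]
  omega

theorem bead_of_part_le {a : ℕ} (h : ν.part 0 ≤ a) : bead ν a = -(a + 1 : ℤ) := by
  have := conj_succ_le_of_part_le ν h
  simp only [bead]
  omega

theorem bead_lt {N : ℕ} (hN : ν.part N = 0) (a : ℕ) : bead ν a < N := by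
  have := conj_succ_le_of_part_le ν (N := N) (a := a) (by omega)
  simp only [bead]
  omega

theorem mayaFun_eq_one_of_le {x : ℤ} (hx : x ≤ -(ν.part 0 + 1 : ℤ)) : mayaFun ν x = 1 :=
  (mayaFun_eq_one_iff_s7 ν x).2 ⟨(-x - 1).toNat, by rw [bead_of_part_le ν (by omega)]; omega⟩

theorem lt_of_mayaFun_eq_one {N : ℕ} (hN : ν.part N = 0) {x : ℤ} (hx : mayaFun ν x = 1) :
    x < N := by
  obtain ⟨a, rfl⟩ := (mayaFun_eq_one_iff_s7 ν x).1 hx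
  exact bead_lt ν hN a

end Beads

section Charge

theorem chargeFun_eq_sub_ncard {f : ℤ → ℤ} (hf : ∀ j, f j = 1 ∨ f j = -1) {M : ℕ} {N : ℤ}
    (hlow : ∀ j < -(M : ℤ), f j = 1) (hup : ∀ j, f j = 1 → j < N) :
    chargeFun f = M - {j | -(M : ℤ) ≤ j ∧ f j = 1}.ncard := by
  have hneg : {j | j < 0 ∧ f j = -1} = ↑{j ∈ Ico (-(M : ℤ)) 0 | f j = -1} := by
    ext j
    simp only [Set.mem_ofPred_eq, coe_filter, mem_Ico]
    constructor
    · rintro ⟨hj, hfj⟩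
      refine ⟨⟨not_lt.1 fun hlt => ?_, hj⟩, hfj⟩
      simp [hlow j hlt] at hfj
    · rintro ⟨⟨-, hj⟩, hfj⟩
      exact ⟨hj, hfj⟩
  have hpos : {j | 0 ≤ j ∧ f j = 1} = ↑{j ∈ Ico 0 N | f j = 1} := by
    ext j
    simp only [Set.mem_ofPred_eq, coe_filter, mem_Ico]
    exact ⟨fun ⟨hj, hfj⟩ => ⟨⟨hj, hup j hfj⟩, hfj⟩, fun ⟨⟨hj, _⟩, hfj⟩ => ⟨hj, hfj⟩⟩
  have hall : {j | -(M : ℤ) ≤ j ∧ f j = 1} =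
      ↑({j ∈ Ico (-(M : ℤ)) 0 | f j = 1} ∪ {j ∈ Ico 0 N | f j = 1}) := by
    ext j
    simp only [Set.mem_ofPred_eq, coe_union, coe_filter, Set.mem_union, mem_Ico]
    constructor
    · rintro ⟨hj, hfj⟩
      have := hup j hfj
      omega
    · rintro (⟨⟨hj, -⟩, hfj⟩ | ⟨⟨hj, -⟩, hfj⟩) <;> exact ⟨by omega, hfj⟩
  have hdisj : Disjoint {j ∈ Ico (-(M : ℤ)) 0 | f j = 1} {j ∈ Ico 0 N | f j = 1} :=
    disjoint_filter_filter <| disjoint_left.2 fun j h₁ h₂ => by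
      simp only [mem_Ico] at h₁ h₂
      omega
  have hsplit : #{j ∈ Ico (-(M : ℤ)) 0 | f j = 1} + #{j ∈ Ico (-(M : ℤ)) 0 | f j = -1} = M := by
    rw [← filter_congr fun j _ => ⟨(hf j).resolve_left, fun h => by simp [h]⟩,
      card_filter_add_card_filter_not, Int.card_Ico]
    omega
  rw [chargeFun, hneg, hpos, hall, Set.ncard_coe_finset, Set.ncard_coe_finset,
    Set.ncard_coe_finset, card_union_of_disjoint hdisj]
  omega

noncomputable def beadCount (ℓ : ℕ) (ν : YPartition) (K : ℕ) (r : ℤ) : ℕ :=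
  #{a ∈ range K | bead ν a ≡ r [ZMOD ℓ]}

variable {ℓ : ℕ} (ν : YPartition) {r : ℤ} {M : ℕ}

theorem ncard_runner_eq_beadCount (hr0 : 0 ≤ r) (hrℓ : r < ℓ) (hM : ν.part 0 ≤ M * ℓ) :
    {j : ℤ | -(M : ℤ) ≤ j ∧ mayaFun ν (r + j * ℓ) = 1}.ncard = beadCount ℓ ν (M * ℓ) r := by
  have hMℓ : (ν.part 0 : ℤ) ≤ M * ℓ := by exact_mod_cast hM
  rw [beadCount, ← Set.ncard_coe_finset, eq_comm]
  refine Set.ncard_congr (fun a _ => (bead ν a - r) / ℓ) ?_ ?_ ?_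
  · intro a ha
    simp only [coe_filter, mem_range, Set.mem_ofPred_eq] at ha
    have hdiv := Int.ediv_mul_cancel ha.2.symm.dvd
    have hlow := neg_le_bead ν a
    have ha' : (a : ℤ) < M * ℓ := by exact_mod_cast ha.1
    refine ⟨?_, (mayaFun_eq_one_iff_s7 ν _).2 ⟨a, by omega⟩⟩
    by_contra! hj
    have : (bead ν a - r) / ℓ * ℓ ≤ (-M - 1) * ℓ :=
      mul_le_mul_of_nonneg_right (by omega) (by omega)
    nlinarith
  · intro a b ha hb hab
    simp only [coe_filter, mem_range, Set.mem_ofPred_eq] at ha hb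
    have hdiv_a := Int.ediv_mul_cancel ha.2.symm.dvd
    have hdiv_b := Int.ediv_mul_cancel hb.2.symm.dvd
    rw [hab] at hdiv_a
    exact (bead_strictAnti ν).injective (by omega)
  · rintro j ⟨hj, hbead⟩
    obtain ⟨a, ha⟩ := (mayaFun_eq_one_iff_s7 ν _).1 hbead
    refine ⟨a, ?_, ?_⟩
    · simp only [coe_filter, mem_range, Set.mem_ofPred_eq]
      refine ⟨not_le.1 fun hle => ?_, ?_⟩
      · rw [bead_of_part_le ν (by omega)] at ha
        have : -(M : ℤ) * ℓ ≤ j * ℓ := mul_le_mul_of_nonneg_right hj (by omega)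
        have : ((M * ℓ : ℕ) : ℤ) ≤ a := by exact_mod_cast hle
        push_cast at this
        nlinarith
      · rw [← ha, Int.ModEq, Int.add_mul_emod_self_right]
    · rw [← ha, add_sub_cancel_left, Int.mul_ediv_cancel _ (by omega)]

theorem chargeQuot_eq_sub_beadCount (hℓ : 1 ≤ ℓ) (hr0 : 0 ≤ r) (hrℓ : r < ℓ)
    (hM : ν.part 0 ≤ M * ℓ) : chargeQuot ℓ ν r = M - beadCount ℓ ν (M * ℓ) r := by
  obtain ⟨N, hN⟩ := ν.eventually_zero
  have hMℓ : (ν.part 0 : ℤ) ≤ M * ℓ := by exact_mod_cast hM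
  have hlow : ∀ j < -(M : ℤ), mayaFun ν (r + j * ℓ) = 1 := fun j hj =>
    mayaFun_eq_one_of_le ν <| by
      have : j * ℓ ≤ (-M - 1) * ℓ := mul_le_mul_of_nonneg_right (by omega) (by omega)
      nlinarith
  have hup : ∀ j, mayaFun ν (r + j * ℓ) = 1 → j < N := fun j hj => by
    have := lt_of_mayaFun_eq_one ν (hN N le_rfl) hj
    nlinarith
  rw [chargeQuot, chargeFun_eq_sub_ncard (fun j => mayaFun_eq_one_or_eq_neg_one ν _) hlow hup,
    ncard_runner_eq_beadCount ν hr0 hrℓ hM]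

end Charge

section Skew

theorem card_filter_Ioc_sub_one_add_ite (P : ℤ → Prop) [DecidablePred P] {p q : ℤ}
    (hpq : p ≤ q) :
    #{c ∈ Ioc p q | P (c - 1)} + (if P q then 1 else 0) =
      #{c ∈ Ioc p q | P c} + (if P p then 1 else 0) := by
  have hshift : #{c ∈ Ioc p q | P (c - 1)} = #{c ∈ Ico p q | P c} :=
    card_nbij' (· - 1) (· + 1) (fun c hc => by simp_all)
      (fun c hc => by simp_all) (fun c _ => by simp) (fun c _ => by simp)
  have hIco : #{c ∈ Icc p q | P c} = #{c ∈ Ico p q | P c} + (if P q then 1 else 0) := by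
    rw [← Ico_insert_right hpq, filter_insert]
    split_ifs <;> simp
  have hIoc : #{c ∈ Icc p q | P c} = #{c ∈ Ioc p q | P c} + (if P p then 1 else 0) := by
    rw [← Ioc_insert_left hpq, filter_insert]
    split_ifs <;> simp
  omega

variable {lam mu : YPartition}

theorem ncard_skew_filter_eq_sum {K : ℕ} (hK : mu.part 0 ≤ K) (P : ℤ → Prop) [DecidablePred P] :
    {x : ℤ × ℤ | SkewMem lam mu x ∧ P (x.2 - x.1)}.ncard =
      ∑ a ∈ range K, #{c ∈ Ioc (bead lam a) (bead mu a) | P c} := by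
  set g : (Σ _ : ℕ, ℤ) → ℤ × ℤ := fun p => ((p.1 + 1 : ℤ), p.2 + p.1 + 1)
  have hg : Function.Injective g := by
    rintro ⟨a, c⟩ ⟨b, d⟩ h
    simp only [g, Prod.mk.injEq] at h
    obtain rfl : a = b := by omega
    simp only [Sigma.mk.injEq, heq_eq_eq, true_and]
    omega
  have hset : {x : ℤ × ℤ | SkewMem lam mu x ∧ P (x.2 - x.1)} =
      ↑(((range K).sigma fun a => {c ∈ Ioc (bead lam a) (bead mu a) | P c}).image g) := by
    ext ⟨x₁, x₂⟩
    simp only [Set.mem_ofPred_eq, coe_image, Set.mem_image, mem_coe, mem_sigma, mem_range,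
      mem_filter, mem_Ioc, g, Prod.mk.injEq, Sigma.exists]
    constructor
    · rintro ⟨⟨hmu, hlam⟩, hP⟩
      obtain ⟨a, rfl⟩ : ∃ a : ℕ, x₁ = a + 1 := ⟨(x₁ - 1).toNat, by have := hmu.1; omega⟩
      obtain ⟨k, rfl⟩ : ∃ k : ℕ, x₂ = k + 1 := ⟨(x₂ - 1).toNat, by have := hmu.2.1; omega⟩
      rw [memYD_iff_lt_conj] at hmu hlam
      have hcol := (lt_conj_succ_iff mu a k).1 hmu
      have := mu.antitone 0 k (Nat.zero_le k)
      refine ⟨a, k - a, ⟨by omega, ⟨?_, ?_⟩, by simpa using hP⟩, rfl, by ring⟩ <;>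
        simp only [bead] <;> omega
    · rintro ⟨a, c, ⟨-, ⟨hlo, hhi⟩, hP⟩, rfl, rfl⟩
      have := neg_le_bead lam a
      obtain ⟨k, hk⟩ : ∃ k : ℕ, c + a = k := ⟨(c + a).toNat, by omega⟩
      simp only [bead] at hlo hhi
      rw [show c + a + 1 = (k : ℤ) + 1 by omega, SkewMem, memYD_iff_lt_conj,
        memYD_iff_lt_conj]
      exact ⟨⟨by omega, by omega⟩, by simpa [show (k : ℤ) + 1 - (a + 1) = c by omega] using hP⟩
  rw [hset, Set.ncard_coe_finset, card_image_of_injective _ hg, card_sigma]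

noncomputable def skewResidueCount (ℓ : ℕ) (lam mu : YPartition) (r : ℤ) : ℕ :=
  {x : ℤ × ℤ | SkewMem lam mu x ∧ x.2 - x.1 ≡ r [ZMOD ℓ]}.ncard

variable {ℓ : ℕ}

theorem skewResidueCount_eq_ncard_emod (hℓ : 1 ≤ ℓ) (r : ℤ) :
    skewResidueCount ℓ lam mu r =
      {x : ℤ × ℤ | SkewMem lam mu x ∧ Int.emod (x.2 - x.1) ℓ = ((r % ℓ).toNat : ℤ)}.ncard := by
  have := Int.emod_nonneg r (by omega : (ℓ : ℤ) ≠ 0)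
  simp only [skewResidueCount, Int.ModEq, Int.toNat_of_nonneg this]
  rfl

theorem skewResidueCount_add_one_add_beadCount (hsub : Sub lam mu) {K : ℕ}
    (hK : mu.part 0 ≤ K) (r : ℤ) :
    skewResidueCount ℓ lam mu (r + 1) + beadCount ℓ mu K r =
      skewResidueCount ℓ lam mu r + beadCount ℓ lam K r := by
  have hshift : skewResidueCount ℓ lam mu (r + 1) =
      {x : ℤ × ℤ | SkewMem lam mu x ∧ x.2 - x.1 - 1 ≡ r [ZMOD ℓ]}.ncard := by
    simp only [skewResidueCount, Int.modEq_iff_dvd, show ∀ c, r - (c - 1) = r + 1 - c by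
      intro c; ring]
  rw [hshift, skewResidueCount, ncard_skew_filter_eq_sum hK (fun c => c - 1 ≡ r [ZMOD ℓ]),
    ncard_skew_filter_eq_sum hK (fun c => c ≡ r [ZMOD ℓ]),
    beadCount, beadCount, card_filter, card_filter, ← sum_add_distrib, ← sum_add_distrib]
  refine sum_congr rfl fun a _ => card_filter_Ioc_sub_one_add_ite (· ≡ r [ZMOD ℓ]) ?_
  have := conj_le_conj_of_sub hsub a
  simp only [bead]
  omega

theorem chargeQuot_eq_of_skewResidueCount_eq (hℓ : 1 ≤ ℓ) (hsub : Sub lam mu) {r : ℤ}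
    (hr0 : 0 ≤ r) (hrℓ : r < ℓ)
    (h : skewResidueCount ℓ lam mu (r + 1) = skewResidueCount ℓ lam mu r) :
    chargeQuot ℓ mu r = chargeQuot ℓ lam r := by
  set M := lam.part 0 + mu.part 0
  have hM : M ≤ M * ℓ := Nat.le_mul_of_pos_right M hℓ
  have hlam : lam.part 0 ≤ M * ℓ := by omega
  have hmu : mu.part 0 ≤ M * ℓ := by omega
  have := skewResidueCount_add_one_add_beadCount (ℓ := ℓ) hsub hmu r
  rw [chargeQuot_eq_sub_beadCount mu hℓ hr0 hrℓ hmu,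
    chargeQuot_eq_sub_beadCount lam hℓ hr0 hrℓ hlam]
  omega

end Skew
end Wreath

theorem equal_residue_counts_core (ℓ : ℕ) (hℓ : 1 ≤ ℓ) (lam mu : YPartition)
    (hsub : Sub lam mu)
    (h : ∀ i i' : ℕ, i < ℓ → i' < ℓ →
      Set.ncard {x | SkewMem lam mu x ∧ Int.emod (x.2 - x.1) (ℓ : ℤ) = (i : ℤ)} =
      Set.ncard {x | SkewMem lam mu x ∧ Int.emod (x.2 - x.1) (ℓ : ℤ) = (i' : ℤ)}) :
    coreOf ℓ mu = coreOf ℓ lam := by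
  have hℓ0 : (ℓ : ℤ) ≠ 0 := by omega
  have hres_lt : ∀ r : ℤ, (r % ℓ).toNat < ℓ := fun r => by
    have := Int.emod_lt_of_pos r (by omega : (0 : ℤ) < ℓ)
    omega
  have hcount : ∀ r : ℤ, skewResidueCount ℓ lam mu (r + 1) = skewResidueCount ℓ lam mu r :=
    fun r => by
      rw [skewResidueCount_eq_ncard_emod hℓ, skewResidueCount_eq_ncard_emod hℓ]
      exact h _ _ (hres_lt _) (hres_lt _)
  have hcharge : ∀ j : ℤ, chargeQuot ℓ mu (Int.emod j ℓ) = chargeQuot ℓ lam (Int.emod j ℓ) :=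
    fun j => chargeQuot_eq_of_skewResidueCount_eq hℓ hsub (Int.emod_nonneg j hℓ0)
      (Int.emod_lt_of_pos j (by omega)) (hcount _)
  simp only [coreOf, hcharge]
end
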